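/- arXiv:1910.03465 — 7 statements merged into one kernel-verified Lean document; each statement's English description precedes it below -/
import Mathlib

section
/- The 3x3 integer matrix M with rows (-2n, r, k), (r, 0, 0), (k, 0, -d) has determinant d*r^2, and its invariant factors are g1 = gcd(2n, r, k, d), g2 = gcd(r^2, k*r, r*d, 2*n*d - k^2)/g1, and g3 = d*r^2/(g1*g2). -/
private lemma gcdeq (a b : ℕ) : gcd a b = Nat.gcd a b := rfl
private lemma gcdl (a b c : ℕ) : Nat.gcd a (Nat.gcd b c) = Nat.gcd b (Nat.gcd a c) := by
  rw [← Nat.gcd_assoc, Nat.gcd_comm a b, Nat.gcd_assoc]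
private lemma gcdd (a b : ℕ) : Nat.gcd a (Nat.gcd a b) = Nat.gcd a b := by
  rw [← Nat.gcd_assoc, Nat.gcd_self]

/-- The matrix M with rows (-2n, r, k), (r, 0, 0), (k, 0, -d) has determinant d*r²,
its first determinantal divisor (gcd of entries) is gcd(2n, r, k, d) and its second
determinantal divisor (gcd of all 2×2 minors, i.e. of the entries of the adjugate)
is gcd(r², k*r, r*d, 2nd - k²); hence its invariant factors are
g1 = gcd(2n,r,k,d), g2 = gcd(r²,kr,rd,2nd-k²)/g1, g3 = d*r²/(g1*g2). -/
theorem stmt_1 (n k r d : ℤ) (hr : 0 < r) (hd : 0 < d) :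
    (Matrix.of ![![-2*n, r, k], ![r, 0, 0], ![k, 0, -d]]).det = d * r ^ 2 ∧
    (Finset.univ.gcd fun p : Fin 3 × Fin 3 =>
        ((Matrix.of ![![-2*n, r, k], ![r, 0, 0], ![k, 0, -d]]) p.1 p.2).natAbs)
      = Int.gcd (2*n) (Int.gcd r (Int.gcd k d)) ∧
    (Finset.univ.gcd fun p : Fin 3 × Fin 3 =>
        ((Matrix.of ![![-2*n, r, k], ![r, 0, 0], ![k, 0, -d]]).adjugate p.1 p.2).natAbs)
      = Int.gcd (r^2) (Int.gcd (k*r) (Int.gcd (r*d) (2*n*d - k^2))) := by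
  have huniv : (Finset.univ : Finset (Fin 3 × Fin 3)) =
      {(0,0),(0,1),(0,2),(1,0),(1,1),(1,2),(2,0),(2,1),(2,2)} := by decide
  refine ⟨?_, ?_, ?_⟩
  · simp [Matrix.det_fin_three, Matrix.vecHead, Matrix.vecTail]; ring
  · rw [huniv]
    simp [Finset.gcd_insert, Finset.gcd_singleton, Int.gcd, Matrix.vecHead, Matrix.vecTail,
      gcdeq, Nat.gcd_comm, Nat.gcd_assoc, gcdl, gcdd]
  · rw [huniv]
    simp [Finset.gcd_insert, Finset.gcd_singleton, Int.gcd, Matrix.adjugate_fin_three,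
      Matrix.vecHead, Matrix.vecTail, sq,
      gcdeq, Nat.gcd_comm, Nat.gcd_assoc, gcdl, gcdd]
    rw [mul_comm r k]
    simp [Nat.gcd_comm, Nat.gcd_assoc, gcdl, gcdd]
end

section
/- The finite abelian group Z/g1 × Z/g2 × Z/g3, where g1 = gcd(2n, r, k, d), g2 = gcd(r^2, kr, rd, 2nd - k^2)/g1, g3 = dr^2/(g1 g2), is cyclic if and only if gcd(r, 2nd - k^2) = 1. -/
/-!
Every divisor of `r` and of `m = 2nd - k²` divides all four entries of
`g1 * g2 = gcd(r², kr, rd, m)`, and also `g3 = dr² / (g1 * g2)` since `g1 * g2 ∣ rd`.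
Hence if `Z/g1 × Z/g2 × Z/g3` is cyclic, i.e. `g1, g2, g3` are pairwise coprime, then
`gcd(r, m) ∣ gcd(g1 * g2, g3) = 1`. Conversely, if `gcd(r, m) = 1` then `g1 * g2 ∣ gcd(r², m) = 1`,
so the group is `Z/1 × Z/1 × Z/g3`.
-/

theorem isAddCyclic_zmod_prod_iff (a b : ℕ) :
    IsAddCyclic (ZMod a × ZMod b) ↔ a.Coprime b := by
  simp [AddGroup.isAddCyclic_prod_iff, Nat.card_zmod, ZMod.instIsAddCyclic]

theorem isAddCyclic_zmod_prod_zmod_prod_iff (a b c : ℕ) :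
    IsAddCyclic (ZMod a × ZMod b × ZMod c) ↔ a.Coprime b ∧ a.Coprime c ∧ b.Coprime c := by
  rw [AddGroup.isAddCyclic_prod_iff, isAddCyclic_zmod_prod_iff, Nat.card_prod, Nat.card_zmod,
    Nat.card_zmod, Nat.card_zmod, Nat.coprime_mul_iff_right]
  simp only [ZMod.instIsAddCyclic, true_and]
  tauto

theorem Int.natCast_dvd_toNat {a : ℕ} {z : ℤ} (h : (a : ℤ) ∣ z) : a ∣ z.toNat := by
  rcases le_or_gt 0 z with hz | hz
  · exact Int.natCast_dvd_natCast.mp (by rwa [Int.toNat_of_nonneg hz])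
  · simp [Int.toNat_of_nonpos hz.le]

def discrGcd (r k d m : ℤ) : ℕ := Int.gcd (r ^ 2) (Int.gcd (k * r) (Int.gcd (r * d) m))

section discrGcd

variable {r k d m : ℤ}

theorem dvd_discrGcd {x : ℕ} (hr : (x : ℤ) ∣ r ^ 2) (hk : (x : ℤ) ∣ k * r)
    (hd : (x : ℤ) ∣ r * d) (hm : (x : ℤ) ∣ m) : x ∣ discrGcd r k d m :=
  Int.dvd_gcd hr (Int.dvd_coe_gcd hk (Int.dvd_coe_gcd hd hm))

theorem discrGcd_dvd_sq : (discrGcd r k d m : ℤ) ∣ r ^ 2 :=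
  Int.gcd_dvd_left _ _

theorem discrGcd_dvd_mul : (discrGcd r k d m : ℤ) ∣ r * d :=
  (Int.gcd_dvd_right _ _).trans <| (Int.gcd_dvd_right _ _).trans (Int.gcd_dvd_left _ _)

theorem discrGcd_dvd_right : (discrGcd r k d m : ℤ) ∣ m :=
  (Int.gcd_dvd_right _ _).trans <| (Int.gcd_dvd_right _ _).trans (Int.gcd_dvd_right _ _)

theorem gcd_dvd_discrGcd : Int.gcd r m ∣ discrGcd r k d m := by
  have hr : (Int.gcd r m : ℤ) ∣ r := Int.gcd_dvd_left _ _
  exact dvd_discrGcd (hr.trans (dvd_pow_self r two_ne_zero)) (hr.mul_left k) (hr.mul_right d)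
    (Int.gcd_dvd_right _ _)

theorem gcd_dvd_toNat_div_discrGcd : Int.gcd r m ∣ (d * r ^ 2).toNat / discrGcd r k d m := by
  refine Nat.dvd_div_of_mul_dvd (Int.natCast_dvd_toNat ?_)
  have h : (d * r ^ 2) = (r * d) * r := by ring
  rw [h, Nat.cast_mul]
  exact mul_dvd_mul discrGcd_dvd_mul (Int.gcd_dvd_left _ _)

theorem gcd_eq_one_of_coprime_discrGcd
    (h : (discrGcd r k d m).Coprime ((d * r ^ 2).toNat / discrGcd r k d m)) :
    Int.gcd r m = 1 :=
  Nat.dvd_one.mp (h ▸ Nat.dvd_gcd gcd_dvd_discrGcd gcd_dvd_toNat_div_discrGcd)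

theorem discrGcd_eq_one_of_gcd_eq_one (h : Int.gcd r m = 1) : discrGcd r k d m = 1 := by
  have hsq : Int.gcd (r ^ 2) m = 1 :=
    Int.isCoprime_iff_gcd_eq_one.mp (Int.isCoprime_iff_gcd_eq_one.mpr h).pow_left
  exact Nat.dvd_one.mp (hsq ▸ Int.dvd_gcd discrGcd_dvd_sq discrGcd_dvd_right)

end discrGcd

theorem gcd_two_mul_gcd_gcd_dvd_discrGcd (n k r d : ℤ) :
    Int.gcd (2 * n) (Int.gcd r (Int.gcd k d)) ∣ discrGcd r k d (2 * n * d - k ^ 2) := by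
  set g := Int.gcd (2 * n) (Int.gcd r (Int.gcd k d))
  have hn : (g : ℤ) ∣ 2 * n := Int.gcd_dvd_left _ _
  have hr : (g : ℤ) ∣ r := (Int.gcd_dvd_right _ _).trans (Int.gcd_dvd_left _ _)
  have hk : (g : ℤ) ∣ k :=
    (Int.gcd_dvd_right _ _).trans <| (Int.gcd_dvd_right _ _).trans (Int.gcd_dvd_left _ _)
  have hd : (g : ℤ) ∣ d :=
    (Int.gcd_dvd_right _ _).trans <| (Int.gcd_dvd_right _ _).trans (Int.gcd_dvd_right _ _)
  exact dvd_discrGcd (hr.trans (dvd_pow_self r two_ne_zero)) (hk.mul_right r) (hr.mul_right d)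
    (dvd_sub (hn.mul_right d) (hk.trans (dvd_pow_self k two_ne_zero)))

theorem stmt_2_general (n k r d : ℤ)
    (g1 g2 g3 : ℕ)
    (hg1 : g1 = Int.gcd (2*n) (Int.gcd r (Int.gcd k d)))
    (hg2 : g2 = Int.gcd (r^2) (Int.gcd (k*r) (Int.gcd (r*d) (2*n*d - k^2))) / g1)
    (hg3 : g3 = (d * r^2).toNat / (g1 * g2)) :
    IsAddCyclic (ZMod g1 × ZMod g2 × ZMod g3) ↔ Int.gcd r (2*n*d - k^2) = 1 := by
  have hG : g1 * g2 = discrGcd r k d (2 * n * d - k ^ 2) := by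
    rw [hg2, hg1]
    exact Nat.mul_div_cancel' (gcd_two_mul_gcd_gcd_dvd_discrGcd n k r d)
  rw [hG] at hg3
  rw [isAddCyclic_zmod_prod_zmod_prod_iff]
  constructor
  · rintro ⟨-, h13, h23⟩
    apply gcd_eq_one_of_coprime_discrGcd (k := k)
    rw [← hg3, ← hG]
    exact Nat.Coprime.mul_left h13 h23
  · intro h
    rw [discrGcd_eq_one_of_gcd_eq_one h, mul_eq_one] at hG
    obtain ⟨rfl, rfl⟩ := hG
    simp

/-- The group Z/g1 × Z/g2 × Z/g3, with g1 = gcd(2n,r,k,d),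
g2 = gcd(r²,kr,rd,2nd-k²)/g1, g3 = d*r²/(g1*g2), is cyclic iff gcd(r, 2nd-k²) = 1. -/
theorem stmt_2 (n k r d : ℤ) (hr : 0 < r) (hd : 0 < d)
    (g1 g2 g3 : ℕ)
    (hg1 : g1 = Int.gcd (2*n) (Int.gcd r (Int.gcd k d)))
    (hg2 : g2 = Int.gcd (r^2) (Int.gcd (k*r) (Int.gcd (r*d) (2*n*d - k^2))) / g1)
    (hg3 : g3 = (d * r^2).toNat / (g1 * g2)) :
    IsAddCyclic (ZMod g1 × ZMod g2 × ZMod g3) ↔ Int.gcd r (2*n*d - k^2) = 1 :=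
  stmt_2_general n k r d g1 g2 g3 hg1 hg2 hg3
end

section
/- Let d be a positive integer with d ≡ 2 (mod 6). Then d satisfies condition (**) if and only if -3 is a square modulo 2d. -/
/-!
By quadratic reciprocity `(-3 / p) = (p / 3)` for every odd prime `p`, so for `p ≠ 2, 3` the
number `-3` is a square modulo `p` exactly when `p ≡ 1 (mod 3)`. Such square roots lift to all
powers of `p` (Hensel, as `p ∤ 2 · (-3)`) and glue along coprime moduli (Chinese remainders).
Writing `d = 2m`, the condition says that `m` is odd with all prime factors `≡ 1 (mod 3)`; since
`-3` is a square modulo `4` but not modulo `8`, this is equivalent to `-3` being a square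
modulo `2d = 4m`.
-/

theorem legendreSym.at_neg_three {p : ℕ} [Fact p.Prime] (hp : p ≠ 2) :
    legendreSym p (-3) = legendreSym 3 p := by
  have hodd : p % 2 = 1 := Nat.odd_iff.mp ((Fact.out : p.Prime).odd_of_ne_two hp)
  have hqr := legendreSym.quadratic_reciprocity' (p := 3) (by norm_num) hp
  rw [Nat.cast_ofNat] at hqr
  rw [legendreSym.at_neg hp, ZMod.χ₄_eq_neg_one_pow hodd, hqr, ← mul_assoc, ← pow_add]
  norm_num [← two_mul, pow_mul]

theorem ZMod.isSquare_neg_three_iff {p : ℕ} [Fact p.Prime] (hp2 : p ≠ 2) (hp3 : p ≠ 3) :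
    IsSquare (-3 : ZMod p) ↔ p % 3 = 1 := by
  have hp_not_dvd : ¬ 3 ∣ p := fun h =>
    hp3 ((Nat.prime_dvd_prime_iff_eq Nat.prime_three Fact.out).mp h).symm
  have h3 : ((-3 : ℤ) : ZMod p) ≠ 0 := by
    rw [ne_eq, ZMod.intCast_zmod_eq_zero_iff_dvd, Int.dvd_neg]
    exact_mod_cast mt (Nat.prime_dvd_prime_iff_eq Fact.out Nat.prime_three).mp hp3
  have hsq := legendreSym.eq_one_iff p h3
  push_cast at hsq
  rw [← hsq, legendreSym.at_neg_three hp2, legendreSym.mod, ← Int.natCast_mod]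
  rcases (by omega : p % 3 = 1 ∨ p % 3 = 2) with h | h <;> rw [h]
  · simp [legendreSym.at_one]
  · rw [Nat.cast_ofNat, legendreSym.at_two (by norm_num)]
    decide

theorem ZMod.isSquare_intCast_iff {n : ℕ} {a : ℤ} :
    IsSquare (a : ZMod n) ↔ ∃ x : ℤ, x ^ 2 ≡ a [ZMOD n] := by
  simp only [← ZMod.intCast_eq_intCast_iff, IsSquare, ← sq]
  constructor
  · rintro ⟨r, hr⟩
    obtain ⟨x, rfl⟩ := ZMod.intCast_surjective r
    exact ⟨x, by push_cast; rw [hr, sq]⟩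
  · rintro ⟨x, hx⟩
    exact ⟨x, by push_cast at hx; rw [← hx, sq]⟩

namespace Int

theorem exists_sq_modEq_mul_of_dvd {p q x a : ℤ} (hpq : p ∣ q) (hx : IsCoprime (2 * x) p)
    (h : x ^ 2 ≡ a [ZMOD q]) : ∃ y, y ^ 2 ≡ a [ZMOD p * q] := by
  obtain ⟨c, hc⟩ := modEq_iff_dvd.mp h
  obtain ⟨u, v, huv⟩ := hx
  obtain ⟨r, rfl⟩ := hpq
  -- Newton step: `u` inverts the derivative `2x` modulo `p`.
  refine ⟨x + p * r * c * u, modEq_iff_dvd.mpr ⟨c * v - r * c ^ 2 * u ^ 2, ?_⟩⟩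
  linear_combination hc - p * r * c * huv

theorem exists_sq_modEq_mul {m n a : ℤ} (hmn : IsCoprime m n)
    (hm : ∃ x, x ^ 2 ≡ a [ZMOD m]) (hn : ∃ y, y ^ 2 ≡ a [ZMOD n]) :
    ∃ z, z ^ 2 ≡ a [ZMOD m * n] := by
  obtain ⟨x, hx⟩ := hm
  obtain ⟨y, hy⟩ := hn
  obtain ⟨u, v, huv⟩ := id hmn
  have hzx : x * v * n + y * u * m ≡ x [ZMOD m] :=
    modEq_iff_dvd.mpr ⟨(x - y) * u, by linear_combination -x * huv⟩
  have hzy : x * v * n + y * u * m ≡ y [ZMOD n] :=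
    modEq_iff_dvd.mpr ⟨(y - x) * v, by linear_combination -y * huv⟩
  refine ⟨x * v * n + y * u * m, modEq_iff_dvd.mpr (hmn.mul_dvd ?_ ?_)⟩
  · exact modEq_iff_dvd.mp ((hzx.pow 2).trans hx)
  · exact modEq_iff_dvd.mp ((hzy.pow 2).trans hy)

theorem exists_sq_modEq_prime_pow {p : ℕ} (hp : p.Prime) (hp2 : p ≠ 2) {a : ℤ}
    (ha : ¬ (p : ℤ) ∣ a) (h : ∃ x, x ^ 2 ≡ a [ZMOD p]) (k : ℕ) :
    ∃ x, x ^ 2 ≡ a [ZMOD p ^ (k + 1)] := by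
  have hpZ := Nat.prime_iff_prime_int.mp hp
  induction k with
  | zero => simpa using h
  | succ k ih =>
    obtain ⟨x, hx⟩ := ih
    have hxp : ¬ (p : ℤ) ∣ x := fun hpx =>
      ha ((hx.of_dvd (dvd_pow_self _ k.succ_ne_zero)).dvd_iff.mp (dvd_pow hpx two_ne_zero))
    have h2p : ¬ (p : ℤ) ∣ 2 := fun h2 =>
      hp2 ((Nat.prime_dvd_prime_iff_eq hp Nat.prime_two).mp (by exact_mod_cast h2))
    have hcop : IsCoprime (2 * x) p :=
      (hpZ.coprime_iff_not_dvd.mpr fun h => (hpZ.dvd_or_dvd h).elim h2p hxp).symm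
    rw [pow_succ']
    exact exists_sq_modEq_mul_of_dvd (dvd_pow_self _ k.succ_ne_zero) hcop hx

theorem exists_sq_modEq_of_forall_prime_dvd {n : ℕ} {a : ℤ}
    (h : ∀ p, p.Prime → p ∣ n → p ≠ 2 ∧ ¬ (p : ℤ) ∣ a ∧ ∃ x, x ^ 2 ≡ a [ZMOD p]) :
    ∃ x, x ^ 2 ≡ a [ZMOD n] := by
  induction n using Nat.recOnPosPrimePosCoprime with
  | zero => exact absurd rfl (h 2 Nat.prime_two (dvd_zero 2)).1
  | one => exact ⟨0, by simp [modEq_one]⟩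
  | prime_pow p k hp hk =>
    obtain ⟨hp2, ha, hsq⟩ := h p hp (dvd_pow_self p hk.ne')
    obtain ⟨k, rfl⟩ := Nat.exists_eq_add_of_lt hk
    simpa using exists_sq_modEq_prime_pow hp hp2 ha hsq k
  | coprime m n _ _ hmn ihm ihn =>
    push_cast
    exact exists_sq_modEq_mul (Nat.isCoprime_iff_coprime.mpr hmn)
      (ihm fun p hp hpm => h p hp (hpm.mul_right n)) (ihn fun p hp hpn => h p hp (hpn.mul_left m))

theorem exists_sq_modEq_neg_three_iff {p : ℕ} (hp : p.Prime) (hp2 : p ≠ 2) (hp3 : p ≠ 3) :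
    (∃ x : ℤ, x ^ 2 ≡ -3 [ZMOD p]) ↔ p % 3 = 1 := by
  have : Fact p.Prime := ⟨hp⟩
  rw [← ZMod.isSquare_intCast_iff, ← ZMod.isSquare_neg_three_iff hp2 hp3]
  push_cast
  rfl

theorem exists_sq_modEq_neg_three_of_forall_prime_dvd {n : ℕ}
    (h : ∀ p, p.Prime → p ∣ n → p % 3 = 1) : ∃ x : ℤ, x ^ 2 ≡ -3 [ZMOD n] := by
  refine exists_sq_modEq_of_forall_prime_dvd fun p hp hpn => ?_
  have hp3 := h p hp hpn
  have hp_ne_three : p ≠ 3 := by omega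
  refine ⟨by omega, fun hdvd => hp_ne_three ?_,
    (exists_sq_modEq_neg_three_iff hp (by omega) hp_ne_three).mpr hp3⟩
  exact (Nat.prime_dvd_prime_iff_eq hp Nat.prime_three).mp (by exact_mod_cast Int.dvd_neg.mp hdvd)

theorem not_sq_modEq_neg_three_eight (x : ℤ) : ¬ x ^ 2 ≡ -3 [ZMOD 8] := by
  change ¬ x ^ 2 ≡ -3 [ZMOD ((8 : ℕ) : ℤ)]
  rw [← ZMod.intCast_eq_intCast_iff]
  push_cast
  generalize (x : ZMod 8) = y
  revert y
  decide

end Int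

theorem stmt_5_general (d : ℤ) (hd6 : d % 6 = 2) :
    (2 ∣ d ∧ ¬ (4 ∣ d) ∧ ¬ (9 ∣ d) ∧
      ∀ p : ℕ, p.Prime → Odd p → p % 3 = 2 → ¬ ((p : ℤ) ∣ d)) ↔
    (∃ x : ℤ, x ^ 2 ≡ -3 [ZMOD 2 * d]) := by
  constructor
  · rintro ⟨-, h4, -, hprimes⟩
    obtain ⟨m, rfl⟩ : ∃ m, d = 2 * m := ⟨d / 2, by omega⟩
    obtain ⟨j, hj⟩ : ∃ j, m = 2 * j + 1 := ⟨m / 2, by omega⟩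
    have hm : ∃ x : ℤ, x ^ 2 ≡ -3 [ZMOD m.natAbs] := by
      refine Int.exists_sq_modEq_neg_three_of_forall_prime_dvd fun p hp hpm => ?_
      have hpd : (p : ℤ) ∣ 2 * m := (Int.ofNat_dvd_left.mpr hpm).mul_left 2
      have hp2 : p ≠ 2 := by rintro rfl; omega
      have hp3 : p ≠ 3 := by rintro rfl; omega
      have hp_mod : p % 3 ≠ 0 := fun h =>
        hp3 ((Nat.prime_dvd_prime_iff_eq Nat.prime_three hp).mp (Nat.dvd_of_mod_eq_zero h)).symm
      have := hprimes p hp (hp.odd_of_ne_two hp2)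
      omega
    have hcop : IsCoprime (4 : ℤ) m := by
      simpa using (show IsCoprime (2 : ℤ) m from ⟨-j, 1, by omega⟩).pow_left (m := 2)
    obtain ⟨x, hx⟩ := hm
    rw [← mul_assoc]
    exact Int.exists_sq_modEq_mul hcop ⟨1, by decide⟩ ⟨x, Int.modEq_natAbs.mp hx⟩
  · rintro ⟨x, hx⟩
    refine ⟨by omega, fun ⟨j, hj⟩ => ?_, by omega, fun p hp hodd hp32 hpd => ?_⟩
    · exact Int.not_sq_modEq_neg_three_eight x (hx.of_dvd ⟨j, by omega⟩)
    · have hp2 : p ≠ 2 := by rintro rfl; exact absurd hodd (by decide)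
      have := (Int.exists_sq_modEq_neg_three_iff hp hp2 (by omega)).mp
        ⟨x, hx.of_dvd (hpd.mul_left 2)⟩
      omega

/-- For d ≡ 2 (mod 6), d satisfies (**) iff -3 is a square modulo 2d. -/
theorem stmt_5 (d : ℤ) (hd : 0 < d) (hd6 : d % 6 = 2) :
    (2 ∣ d ∧ ¬ (4 ∣ d) ∧ ¬ (9 ∣ d) ∧
      ∀ p : ℕ, p.Prime → Odd p → p % 3 = 2 → ¬ ((p : ℤ) ∣ d)) ↔
    (∃ x : ℤ, x ^ 2 ≡ -3 [ZMOD 2 * d]) :=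
  stmt_5_general d hd6
end

section
/- Let d ≡ 2 (mod 6) satisfy condition (**), and let r = 2^s * q * r0 where q consists of all prime factors of r congruent to 1 mod 3 and r0 consists of all odd prime factors of r congruent to 2 mod 3. Then there exist integers n and x such that 3*x^2*(r0^2 - 2*n*d*q^2) + 1 ≡ 0 (mod 2*d*r^2). -/
/-!
Write `d = 2m`. Every prime factor of `m q²` is `≡ 1 (mod 3)`, and modulo such a prime `-3`
is a square, `(2ζ + 1)² = -3` for a primitive cube root of unity `ζ`; Newton's iteration lifts
the square root to prime powers and the Chinese remainder theorem glues them, together with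
`1² + 3 ≡ 0 (mod 4)`, to a square root of `-3` modulo `K = 2dq² = 4mq²`. As `3r₀` is invertible
mod `K`, this yields `x` with `K ∣ 3x²r₀² + 1`, which may also be taken `≡ 1 (mod r₀)`. Then
`3x²` is prime to `(2^s r₀)²`, and since `2dr² = K (2^s r₀)²` it remains to solve the linear
congruence `3x² n ≡ (3x²r₀² + 1)/K` modulo `(2^s r₀)²`.
-/

theorem Int.exists_modEq_and_modEq_of_isCoprime {a b : ℤ} (hab : IsCoprime a b) (x y : ℤ) :
    ∃ z, z ≡ x [ZMOD a] ∧ z ≡ y [ZMOD b] := by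
  obtain ⟨u, v, huv⟩ := hab
  refine ⟨y * u * a + x * v * b, Int.modEq_iff_dvd.mpr ⟨u * (x - y), ?_⟩,
    Int.modEq_iff_dvd.mpr ⟨v * (y - x), ?_⟩⟩
  · linear_combination (-x) * huv
  · linear_combination (-y) * huv

theorem Int.ModEq.dvd_of_dvd_sq_add {n y z c : ℤ} (h : z ≡ y [ZMOD n]) (hy : n ∣ y ^ 2 + c) :
    n ∣ z ^ 2 + c :=
  Int.modEq_zero_iff_dvd.mp (((h.pow 2).add_right c).trans (Int.modEq_zero_iff_dvd.mpr hy))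

theorem exists_sq_add_dvd_mul {a b c : ℤ} (hab : IsCoprime a b) (ha : ∃ y, a ∣ y ^ 2 + c)
    (hb : ∃ y, b ∣ y ^ 2 + c) : ∃ y, a * b ∣ y ^ 2 + c := by
  obtain ⟨y₁, h₁⟩ := ha
  obtain ⟨y₂, h₂⟩ := hb
  obtain ⟨z, hz₁, hz₂⟩ := Int.exists_modEq_and_modEq_of_isCoprime hab y₁ y₂
  exact ⟨z, hab.mul_dvd (hz₁.dvd_of_dvd_sq_add h₁) (hz₂.dvd_of_dvd_sq_add h₂)⟩

theorem exists_sq_add_dvd_pow_succ {p a y : ℤ} (hp : IsCoprime (2 * y) p) (hy : p ∣ y ^ 2 + a)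
    (n : ℕ) : ∃ z, p ^ (n + 1) ∣ z ^ 2 + a ∧ z ≡ y [ZMOD p] := by
  obtain ⟨u, v, huv⟩ := hp
  induction n with
  | zero => exact ⟨y, by simpa using hy, rfl⟩
  | succ n ih =>
    obtain ⟨z, ⟨c, hc⟩, hzy⟩ := ih
    obtain ⟨k, hk⟩ := Int.modEq_iff_dvd.mp hzy
    -- Newton step: `u` inverts `2y ≡ 2z` modulo `p`.
    refine ⟨z - c * u * p ^ (n + 1), ⟨c * (v + 2 * k * u) + c ^ 2 * u ^ 2 * p ^ n, ?_⟩,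
      Int.modEq_iff_dvd.mpr ⟨k + c * u * p ^ n, ?_⟩⟩
    · linear_combination hc + 2 * c * u * p ^ (n + 1) * hk - c * p ^ (n + 1) * huv
    · linear_combination hk

theorem Nat.Prime.exists_sq_add_three_dvd {p : ℕ} (hp : p.Prime) (hp3 : p % 3 = 1) :
    ∃ y : ℤ, (p : ℤ) ∣ y ^ 2 + 3 := by
  have := Fact.mk hp
  have h3 : 3 ∣ Fintype.card (ZMod p)ˣ := by
    rw [ZMod.card_units_eq_totient, Nat.totient_prime hp]
    omega
  obtain ⟨ω, hω⟩ := exists_prime_orderOf_dvd_card 3 h3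
  have hζ : IsPrimitiveRoot (ω : ZMod p) 3 :=
    IsPrimitiveRoot.iff_orderOf.mpr (by rwa [orderOf_units])
  have h := hζ.geom_sum_eq_zero (by norm_num)
  simp only [Finset.sum_range_succ, Finset.sum_range_zero] at h
  obtain ⟨y, hy⟩ := ZMod.intCast_surjective (2 * (ω : ZMod p) + 1)
  refine ⟨y, (ZMod.intCast_zmod_eq_zero_iff_dvd _ p).mp ?_⟩
  push_cast [hy]
  linear_combination 4 * h

theorem Nat.Prime.exists_sq_add_three_dvd_pow {p : ℕ} (hp : p.Prime) (hp3 : p % 3 = 1) (n : ℕ) :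
    ∃ y : ℤ, (p : ℤ) ^ n ∣ y ^ 2 + 3 := by
  obtain ⟨y, hy⟩ := hp.exists_sq_add_three_dvd hp3
  cases n with
  | zero => exact ⟨0, by simp⟩
  | succ n =>
    have hcop : IsCoprime (2 * y) p := by
      refine ((Nat.prime_iff_prime_int.mp hp).coprime_iff_not_dvd.mpr fun h => ?_).symm
      have h12 : (p : ℤ) ∣ 12 := by
        have := (hy.mul_left 4).sub (dvd_pow h two_ne_zero)
        rwa [show 4 * (y ^ 2 + 3) - (2 * y) ^ 2 = (12 : ℤ) by ring] at this
      have h12' : p ∣ 12 := by exact_mod_cast h12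
      have := Nat.le_of_dvd (by norm_num) h12'
      interval_cases p <;> norm_num at *
    obtain ⟨z, hz, -⟩ := exists_sq_add_dvd_pow_succ hcop hy n
    exact ⟨z, hz⟩

theorem exists_sq_add_three_dvd {M : ℕ} (hM : ∀ p : ℕ, p.Prime → p ∣ M → p % 3 = 1) :
    ∃ y : ℤ, (M : ℤ) ∣ y ^ 2 + 3 := by
  induction M using Nat.recOnPosPrimePosCoprime with
  | prime_pow p n hp hn =>
    simpa using hp.exists_sq_add_three_dvd_pow (hM p hp (dvd_pow_self p hn.ne')) n
  | zero => exact absurd (hM 2 Nat.prime_two (dvd_zero 2)) (by norm_num)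
  | one => exact ⟨0, by simp⟩
  | coprime a b _ _ hab iha ihb =>
    push_cast
    exact exists_sq_add_dvd_mul (Nat.isCoprime_iff_coprime.mpr hab)
      (iha fun p hp h => hM p hp (h.mul_right b)) (ihb fun p hp h => hM p hp (h.mul_left a))

theorem exists_dvd_three_mul_sq_mul_sq_add_one {K r₀ : ℤ} (hK : ∃ y, K ∣ y ^ 2 + 3)
    (h3r₀K : IsCoprime (3 * r₀) K) : ∃ x, K ∣ 3 * x ^ 2 * r₀ ^ 2 + 1 ∧ x ≡ 1 [ZMOD r₀] := by
  obtain ⟨y, c, hc⟩ := hK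
  obtain ⟨w, t, hwt⟩ := id h3r₀K
  have hx₀ : K ∣ 3 * (3 * (w * y) ^ 2 * r₀ ^ 2 + 1) :=
    ⟨c - y ^ 2 * t * (2 - t * K),
      by linear_combination hc + y ^ 2 * (w * (3 * r₀) + 1 - t * K) * hwt⟩
  obtain ⟨x, hxK, hxr₀⟩ :=
    Int.exists_modEq_and_modEq_of_isCoprime h3r₀K.of_mul_left_right.symm (w * y) 1
  refine ⟨x, Int.modEq_zero_iff_dvd.mp ?_, hxr₀⟩
  exact (((hxK.pow 2).mul_left 3).mul_right _).add_right 1 |>.trans <|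
    Int.modEq_zero_iff_dvd.mpr (h3r₀K.of_mul_left_left.symm.dvd_of_dvd_mul_left hx₀)

theorem exists_modEq_zero_of_dvd_three_mul_sq_mul_sq_add_one {K R r₀ x : ℤ}
    (hx : K ∣ 3 * x ^ 2 * r₀ ^ 2 + 1) (hR : IsCoprime (3 * x ^ 2) R) :
    ∃ n, 3 * x ^ 2 * (r₀ ^ 2 - n * K) + 1 ≡ 0 [ZMOD K * R] := by
  obtain ⟨c, hc⟩ := hx
  obtain ⟨a, b, hab⟩ := hR
  exact ⟨a * c, Int.modEq_zero_iff_dvd.mpr ⟨c * b, by linear_combination hc - K * c * hab⟩⟩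

theorem exists_three_mul_sq_mul_sub_add_one_modEq_zero {K r₀ : ℤ} (s : ℕ)
    (hK : ∃ y, K ∣ y ^ 2 + 3) (h2K : 2 ∣ K) (h3r₀K : IsCoprime (3 * r₀) K)
    (h3r₀ : IsCoprime 3 r₀) :
    ∃ n x : ℤ, 3 * x ^ 2 * (r₀ ^ 2 - n * K) + 1 ≡ 0 [ZMOD K * (2 ^ s * r₀) ^ 2] := by
  obtain ⟨x, hxK, hxr₀⟩ := exists_dvd_three_mul_sq_mul_sq_add_one hK h3r₀K
  have hx2 : IsCoprime x 2 := by
    obtain ⟨c, hc⟩ := h2K.trans hxK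
    exact ⟨-(3 * x * r₀ ^ 2), c, by linear_combination -hc⟩
  have hxr₀' : IsCoprime x r₀ := by
    obtain ⟨k, hk⟩ := Int.modEq_iff_dvd.mp hxr₀
    exact ⟨1, k, by linear_combination -hk⟩
  have h32 : IsCoprime (3 : ℤ) 2 := ⟨1, -1, by norm_num⟩
  have hcop : IsCoprime (3 * x ^ 2) ((2 ^ s * r₀) ^ 2) :=
    ((h32.pow_right.mul_right h3r₀).mul_left (hx2.pow_right.mul_right hxr₀').pow_left).pow_right
  obtain ⟨n, hn⟩ := exists_modEq_zero_of_dvd_three_mul_sq_mul_sq_add_one hxK hcop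
  exact ⟨n, x, hn⟩

theorem Nat.mod_three_eq_one_of_prime_dvd {m p : ℕ} (h2 : ¬ 2 ∣ m) (h3 : ¬ 3 ∣ m)
    (h : ∀ p : ℕ, p.Prime → Odd p → p % 3 = 2 → ¬ p ∣ m) (hp : p.Prime) (hpm : p ∣ m) :
    p % 3 = 1 := by
  have hp2 : p ≠ 2 := by rintro rfl; exact h2 hpm
  have hp3 : ¬ 3 ∣ p := fun h3p => h3 (((Nat.prime_dvd_prime_iff_eq prime_three hp).mp h3p) ▸ hpm)
  have : p % 3 ≠ 2 := fun hp32 => h p hp (hp.odd_of_ne_two hp2) hp32 hpm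
  omega

theorem Nat.coprime_three_mul_four_mul {a b : ℕ} (ha : ∀ p, p.Prime → p ∣ a → Odd p ∧ p % 3 = 2)
    (hb : ∀ p, p.Prime → p ∣ b → p % 3 = 1) : Coprime (3 * a) (4 * b) := by
  refine coprime_of_dvd fun p hp hpa hpb => ?_
  have h₂ : p = 2 ∨ p % 3 = 1 := (hp.dvd_mul.mp hpb).imp
    (fun h => (prime_dvd_prime_iff_eq hp prime_two).mp (hp.dvd_of_dvd_pow (show p ∣ 2 ^ 2 from h)))
    (hb p hp)
  rcases hp.dvd_mul.mp hpa with h | h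
  · rw [(prime_dvd_prime_iff_eq hp prime_three).mp h] at h₂
    omega
  · obtain ⟨hodd, h⟩ := ha p hp h
    rcases h₂ with rfl | h'
    · exact absurd hodd (by decide)
    · omega

theorem stmt_6_general (d : ℤ) (hd : 0 < d) (hd6 : d % 6 = 2)
    (h4 : ¬ (4 ∣ d))
    (hp : ∀ p : ℕ, p.Prime → Odd p → p % 3 = 2 → ¬ ((p : ℤ) ∣ d))
    (r q r0 : ℕ) (s : ℕ) (hrfac : r = 2 ^ s * q * r0)
    (hq : ∀ p : ℕ, p.Prime → p ∣ q → p % 3 = 1)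
    (hr0 : ∀ p : ℕ, p.Prime → p ∣ r0 → Odd p ∧ p % 3 = 2) :
    ∃ n x : ℤ, 3 * x ^ 2 * ((r0 : ℤ) ^ 2 - 2 * n * d * (q : ℤ) ^ 2) + 1
      ≡ 0 [ZMOD 2 * d * (r : ℤ) ^ 2] := by
  obtain ⟨m, rfl⟩ : ∃ m : ℕ, d = 2 * m := ⟨(d / 2).toNat, by omega⟩
  have hm : ∀ p : ℕ, p.Prime → p ∣ m → p % 3 = 1 := fun p =>
    Nat.mod_three_eq_one_of_prime_dvd (by omega) (by omega) fun p hpp hodd hp3 hpm =>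
      hp p hpp hodd hp3 (Int.natCast_dvd_natCast.mpr hpm |>.mul_left 2)
  have hmq : ∀ p : ℕ, p.Prime → p ∣ m * q ^ 2 → p % 3 = 1 := fun p hpp hpd =>
    (hpp.dvd_mul.mp hpd).elim (hm p hpp) fun h => hq p hpp (hpp.dvd_of_dvd_pow h)
  have h4mq : Nat.Coprime (2 ^ 2) (m * q ^ 2) :=
    (Nat.prime_two.coprime_iff_not_dvd.mpr fun h => by simpa using hmq 2 Nat.prime_two h).pow_left 2
  have hK : ∃ y : ℤ, ((2 ^ 2 * (m * q ^ 2) : ℕ) : ℤ) ∣ y ^ 2 + 3 := by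
    push_cast
    exact exists_sq_add_dvd_mul (by exact_mod_cast Nat.isCoprime_iff_coprime.mpr h4mq)
      ⟨1, by norm_num⟩ (exists_sq_add_three_dvd hmq)
  have h3r0K := Nat.isCoprime_iff_coprime.mpr (Nat.coprime_three_mul_four_mul hr0 hmq)
  have h3r0 : IsCoprime (3 : ℤ) r0 := Nat.isCoprime_iff_coprime.mpr <|
    Nat.prime_three.coprime_iff_not_dvd.mpr fun h => by simpa using (hr0 3 Nat.prime_three h).2
  obtain ⟨n, x, h⟩ := exists_three_mul_sq_mul_sub_add_one_modEq_zero s hK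
    ⟨2 * (m * q ^ 2), by push_cast; ring⟩ (by exact_mod_cast h3r0K) h3r0
  refine ⟨n, x, ?_⟩
  convert h using 1 <;> push_cast [hrfac] <;> ring

/-- For d ≡ 2 (mod 6) satisfying (**) and r = 2^s * q * r0 with q a product of
primes ≡ 1 (mod 3) and r0 a product of odd primes ≡ 2 (mod 3), there exist
integers n, x with 3*x²*(r0² - 2*n*d*q²) + 1 ≡ 0 (mod 2*d*r²). -/
theorem stmt_6 (d : ℤ) (hd : 0 < d) (hd6 : d % 6 = 2)
    (heven : 2 ∣ d) (h4 : ¬ (4 ∣ d)) (h9 : ¬ (9 ∣ d))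
    (hp : ∀ p : ℕ, p.Prime → Odd p → p % 3 = 2 → ¬ ((p : ℤ) ∣ d))
    (r q r0 : ℕ) (s : ℕ) (hr : 0 < r) (hrfac : r = 2 ^ s * q * r0)
    (hq : ∀ p : ℕ, p.Prime → p ∣ q → p % 3 = 1)
    (hr0 : ∀ p : ℕ, p.Prime → p ∣ r0 → Odd p ∧ p % 3 = 2) :
    ∃ n x : ℤ, 3 * x ^ 2 * ((r0 : ℤ) ^ 2 - 2 * n * d * (q : ℤ) ^ 2) + 1
      ≡ 0 [ZMOD 2 * d * (r : ℤ) ^ 2] :=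
  stmt_6_general d hd hd6 h4 hp r q r0 s hrfac hq hr0
end

section
/- Let d = 6t satisfy condition (**), and write r = 2^s * q * r0 where q is the product of prime factors of r congruent to 1 mod 3 and r0 is the product of odd prime factors of r congruent to 2 mod 3. Then there exist integers n and x such that x^2*(r0^2 - 12*n*t*q^2) - 4*t*r^2 + 3 ≡ 0 (mod 12*t*r^2). -/
lemma lemA (p : ℕ) (hp : p.Prime) (h3 : p % 3 = 1) : ∃ u : ℤ, (p:ℤ) ∣ u^2 + u + 1 := by
  haveI := Fact.mk hp
  haveI : Fact (Nat.Prime 3) := Fact.mk (by norm_num)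
  have hcard : 3 ∣ Fintype.card (ZMod p)ˣ := by
    rw [ZMod.card_units_eq_totient, Nat.totient_prime hp]
    have := hp.two_le; omega
  obtain ⟨g, hg⟩ := exists_prime_orderOf_dvd_card 3 hcard
  set ω : ZMod p := (g : ZMod p) with hω
  have hω3 : ω ^ 3 = 1 := by
    have h1 := pow_orderOf_eq_one g
    rw [hg] at h1
    rw [hω, ← Units.val_pow_eq_pow_val, h1, Units.val_one]
  have hω1 : ω ≠ 1 := by
    intro h
    have : g = 1 := Units.ext h
    rw [this, orderOf_one] at hg
    norm_num at hg
  have hroot : ω^2 + ω + 1 = 0 := by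
    have h0 : (ω - 1) * (ω^2 + ω + 1) = 0 := by linear_combination hω3
    rcases mul_eq_zero.mp h0 with h | h
    · exact absurd (sub_eq_zero.mp h) hω1
    · exact h
  refine ⟨(ω.val : ℤ), (ZMod.intCast_zmod_eq_zero_iff_dvd _ p).mp ?_⟩
  push_cast
  rw [ZMod.natCast_rightInverse ω]
  exact hroot

lemma lemB (p : ℕ) (hp : p.Prime) (h3 : p % 3 = 1) :
    ∀ a : ℕ, ∃ u : ℤ, (p:ℤ)^(a+1) ∣ u^2 + u + 1 := by
  intro a
  induction a with
  | zero => simpa using lemA p hp h3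
  | succ a ih =>
    obtain ⟨u, m, hm⟩ := ih
    have hpne3 : p ≠ 3 := by intro h; rw [h] at h3; norm_num at h3
    have hnd : ¬ (p:ℤ) ∣ (2*u+1) := by
      intro hdvd
      have h1 : (p:ℤ) ∣ (2*u+1)^2 := hdvd.mul_left _ |>.trans (by rw [sq])
      have h2 : (p:ℤ) ∣ 4*(u^2+u+1) := by rw [hm]; exact ⟨(p:ℤ)^a * (4*m), by ring⟩
      have h3' : (p:ℤ) ∣ 3 := by
        have : (3:ℤ) = 4*(u^2+u+1) - (2*u+1)^2 := by ring
        rw [this]; exact dvd_sub h2 h1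
      have : (p:ℕ) ∣ 3 := by exact_mod_cast h3'
      exact hpne3 ((Nat.prime_dvd_prime_iff_eq hp Nat.prime_three).mp this)
    have hcop : IsCoprime ((p:ℤ)) (2*u+1) :=
      (Prime.coprime_iff_not_dvd (Nat.prime_iff_prime_int.mp hp)).mpr hnd
    obtain ⟨c, d, hcd⟩ := hcop
    refine ⟨u - m*d*(p:ℤ)^(a+1), m*c + m^2*d^2*(p:ℤ)^a, ?_⟩
    linear_combination hm - m*(p:ℤ)^(a+1)*hcd



lemma coprime_of_primes {a b : ℕ} (h : ∀ p, p.Prime → p ∣ a → p ∣ b → False) :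
    Nat.Coprime a b := by
  rw [Nat.coprime_iff_gcd_eq_one]
  by_contra hg
  exact h _ (Nat.minFac_prime hg)
    ((Nat.minFac_dvd _).trans (Nat.gcd_dvd_left a b))
    ((Nat.minFac_dvd _).trans (Nat.gcd_dvd_right a b))

lemma mod3_of_primes : ∀ N : ℕ, 0 < N → (∀ p, p.Prime → p ∣ N → p % 3 = 1) → N % 3 = 1 := by
  intro N
  induction N using Nat.strong_induction_on with
  | _ N ih =>
    intro hN hpr
    by_cases h1 : N = 1
    · simp [h1]
    · have hp := Nat.minFac_prime h1
      have hdvd := Nat.minFac_dvd N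
      have hpmod := hpr _ hp hdvd
      have hM : N / N.minFac * N.minFac = N := Nat.div_mul_cancel hdvd
      have hMlt : N / N.minFac < N := Nat.div_lt_self hN hp.one_lt
      have hMpos : 0 < N / N.minFac :=
        Nat.div_pos (Nat.le_of_dvd hN hdvd) hp.pos
      have hMmod := ih _ hMlt hMpos
        (fun p hp' hpd => hpr p hp' (hpd.trans (Nat.div_dvd_of_dvd hdvd)))
      conv_lhs => rw [← hM]
      rw [Nat.mul_mod, hMmod, hpmod]

lemma lemC : ∀ N : ℕ, 0 < N → (∀ p, p.Prime → p ∣ N → p % 3 = 1) →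
    ∃ u : ℤ, (N:ℤ) ∣ u^2 + u + 1 := by
  intro N
  induction N using Nat.strong_induction_on with
  | _ N ih =>
    intro hN hpr
    by_cases h1 : N = 1
    · exact ⟨0, by simp [h1]⟩
    · set p := N.minFac with hpdef
      have hp := Nat.minFac_prime h1
      have hdvd := Nat.minFac_dvd N
      set a := N.factorization p with hadef
      have ha : 0 < a := hp.factorization_pos_of_dvd hN.ne' hdvd
      set M := N / p^a with hMdef
      have hMN : p^a * M = N := Nat.ordProj_mul_ordCompl_eq_self N p
      have hpM : ¬ p ∣ M := Nat.not_dvd_ordCompl hp hN.ne'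
      have hMpos : 0 < M := Nat.ordCompl_pos p hN.ne'
      have hpa1 : 1 < p^a := Nat.one_lt_pow ha.ne' hp.one_lt
      have hMlt : M < N := by
        calc M ≤ N / p := Nat.div_le_div_left (Nat.le_self_pow ha.ne' p) hp.pos
        _ < N := Nat.div_lt_self hN hp.one_lt
      obtain ⟨u₂, hu₂⟩ := ih M hMlt hMpos
        (fun q hq hqd => hpr q hq (hqd.trans (Nat.ordCompl_dvd N p)))
      obtain ⟨u₁, hu₁⟩ := lemB p hp (hpr p hp hdvd) (a - 1)
      rw [show a - 1 + 1 = a by omega] at hu₁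
      have hcopn : Nat.Coprime (p^a) M :=
        Nat.Coprime.pow_left a ((Nat.Prime.coprime_iff_not_dvd hp).mpr hpM)
      have hcop : IsCoprime ((p:ℤ)^a) ((M:ℤ)) := by
        have := Nat.isCoprime_iff_coprime.mpr hcopn
        push_cast at this
        exact this
      obtain ⟨c, d, hcd⟩ := hcop
      refine ⟨u₂*c*(p:ℤ)^a + u₁*d*(M:ℤ), ?_⟩
      have hNeq : (N:ℤ) = (p:ℤ)^a * (M:ℤ) := by exact_mod_cast hMN.symm
      rw [hNeq]
      set u : ℤ := u₂*c*(p:ℤ)^a + u₁*d*(M:ℤ) with hudef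
      have h₁ : (p:ℤ)^a ∣ u - u₁ := ⟨(u₂ - u₁)*c, by linear_combination u₁*hcd⟩
      have h₂ : (M:ℤ) ∣ u - u₂ := ⟨(u₁ - u₂)*d, by linear_combination u₂*hcd⟩
      have d₁ : (p:ℤ)^a ∣ u^2 + u + 1 := by
        have : u^2+u+1 = (u-u₁)*(u+u₁+1) + (u₁^2+u₁+1) := by ring
        rw [this]; exact dvd_add (h₁.mul_right _) hu₁
      have d₂ : (M:ℤ) ∣ u^2 + u + 1 := by
        have : u^2+u+1 = (u-u₂)*(u+u₂+1) + (u₂^2+u₂+1) := by ring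
        rw [this]; exact dvd_add (h₂.mul_right _) hu₂
      exact IsCoprime.mul_dvd ⟨c, d, hcd⟩ d₁ d₂

/-- For d = 6t satisfying (**) and r = 2^s * q * r0 with q a product of primes
≡ 1 (mod 3) and r0 a product of odd primes ≡ 2 (mod 3), there exist integers
n, x with x²*(r0² - 12*n*t*q²) - 4*t*r² + 3 ≡ 0 (mod 12*t*r²). -/
theorem stmt_7 (d t : ℤ) (ht : 0 < t) (hd : d = 6 * t)
    (heven : 2 ∣ d) (h4 : ¬ (4 ∣ d)) (h9 : ¬ (9 ∣ d))
    (hp : ∀ p : ℕ, p.Prime → Odd p → p % 3 = 2 → ¬ ((p : ℤ) ∣ d))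
    (r q r0 : ℕ) (s : ℕ) (hr : 0 < r) (hrfac : r = 2 ^ s * q * r0)
    (hq : ∀ p : ℕ, p.Prime → p ∣ q → p % 3 = 1)
    (hr0 : ∀ p : ℕ, p.Prime → p ∣ r0 → Odd p ∧ p % 3 = 2) :
    ∃ n x : ℤ, x ^ 2 * ((r0 : ℤ) ^ 2 - 12 * n * t * (q : ℤ) ^ 2) - 4 * t * (r : ℤ) ^ 2 + 3
      ≡ 0 [ZMOD 12 * t * (r : ℤ) ^ 2] := by
  -- basic facts
  set Tn := t.toNat with hTn
  have htT : (Tn : ℤ) = t := Int.toNat_of_nonneg ht.le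
  have h2t : ¬ (2:ℤ) ∣ t := by
    rintro ⟨k, hk⟩; exact h4 ⟨3*k, by rw [hd, hk]; ring⟩
  have h3t : ¬ (3:ℤ) ∣ t := by
    rintro ⟨k, hk⟩; exact h9 ⟨2*k, by rw [hd, hk]; ring⟩
  have hq0 : 0 < q := Nat.pos_of_ne_zero (fun h => by simp [hrfac, h] at hr)
  have hr00 : 0 < r0 := Nat.pos_of_ne_zero (fun h => by simp [hrfac, h] at hr)
  have hTpos : 0 < Tn := by rw [hTn]; omega
  -- prime factors of Tn are ≡ 1 mod 3
  have hTprimes : ∀ p : ℕ, p.Prime → p ∣ Tn → p % 3 = 1 := by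
    intro p hpp hpd
    have hptZ : (p:ℤ) ∣ t := htT ▸ Int.natCast_dvd_natCast.mpr hpd
    have hp2 : p ≠ 2 := by rintro rfl; exact h2t (by exact_mod_cast hptZ)
    have hp3 : p ≠ 3 := by rintro rfl; exact h3t (by exact_mod_cast hptZ)
    have hple := hpp.two_le
    rcases h : p % 3 with _ | n
    · exfalso
      have : (3:ℕ) ∣ p := by omega
      exact hp3 ((Nat.prime_dvd_prime_iff_eq Nat.prime_three hpp).mp this).symm
    · rcases n with _ | n
      · rfl
      · exfalso
        have hmod : p % 3 = 2 := by omega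
        have hodd : Odd p := hpp.odd_of_ne_two hp2
        exact hp p hpp hodd hmod (by rw [hd]; exact hptZ.mul_left 6)
  have h2q : ¬ 2 ∣ q := fun h => by have := hq 2 Nat.prime_two h; omega
  have h3q : ¬ 3 ∣ q := fun h => by have := hq 3 Nat.prime_three h; omega
  have h2r0 : ¬ 2 ∣ r0 := fun h => by
    have := (hr0 2 Nat.prime_two h).1; exact (Nat.not_odd_iff_even.mpr even_two) this
  have h3r0 : ¬ 3 ∣ r0 := fun h => by have := (hr0 3 Nat.prime_three h).2; omega
  have h3r : ¬ 3 ∣ r := by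
    intro h
    rw [hrfac] at h
    rcases (Nat.Prime.dvd_mul Nat.prime_three).mp h with h' | h'
    · rcases (Nat.Prime.dvd_mul Nat.prime_three).mp h' with h'' | h''
      · have := Nat.Prime.dvd_of_dvd_pow (p := 3) Nat.prime_three h''; omega
      · exact h3q h''
    · exact h3r0 h'
  -- the odd part N = Tn * q^2
  set N := Tn * q^2 with hNdef
  have hNpos : 0 < N := by positivity
  have hNprimes : ∀ p : ℕ, p.Prime → p ∣ N → p % 3 = 1 := by
    intro p hpp hpd
    rcases (Nat.Prime.dvd_mul hpp).mp hpd with h | h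
    · exact hTprimes p hpp h
    · exact hq p hpp (hpp.dvd_of_dvd_pow h)
  obtain ⟨u, hu⟩ := lemC N hNpos hNprimes
  have hv : (N:ℤ) ∣ (2*u+1)^2 + 3 := by
    obtain ⟨m, hm⟩ := hu
    exact ⟨4*m, by linear_combination 4*hm⟩
  set v : ℤ := 2*u+1 with hvdef
  -- coprimality of r0 with N, Bezout
  have hcop1 : Nat.Coprime r0 N := by
    apply coprime_of_primes
    intro p hpp h1 h2
    have := (hr0 p hpp h1).2
    have := hNprimes p hpp h2
    omega
  obtain ⟨b, c, hbc⟩ := Nat.isCoprime_iff_coprime.mpr hcop1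
  -- coprimality of K with N, Bezout
  set K := 12 * 2^(2*s) * r0^2 with hKdef
  have hcop2 : Nat.Coprime N K := by
    apply coprime_of_primes
    intro p hpp h1 h2
    have hp3 : p % 3 = 1 := hNprimes p hpp h1
    rw [hKdef] at h2
    rcases (Nat.Prime.dvd_mul hpp).mp h2 with h | h
    · rcases (Nat.Prime.dvd_mul hpp).mp h with h' | h'
      · have h12 : p ∣ 2^2*3 := by norm_num at h' ⊢; exact h'
        rcases (Nat.Prime.dvd_mul hpp).mp h12 with h'' | h''
        · have := (Nat.prime_dvd_prime_iff_eq hpp Nat.prime_two).mp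
            (hpp.dvd_of_dvd_pow h''); omega
        · have := (Nat.prime_dvd_prime_iff_eq hpp Nat.prime_three).mp h''; omega
      · have := (Nat.prime_dvd_prime_iff_eq hpp Nat.prime_two).mp
          (hpp.dvd_of_dvd_pow h'); omega
    · have := (hr0 p hpp (hpp.dvd_of_dvd_pow h)).2; omega
  obtain ⟨A, B, hAB⟩ := Nat.isCoprime_iff_coprime.mpr hcop2
  -- hAB : A * N + B * K = 1 over ℤ
  set x : ℤ := v*b*B*(K:ℤ) + A*(N:ℤ) with hxdef
  have h1 : (N:ℤ) ∣ x - v*b := ⟨A - v*b*A, by linear_combination (v*b)*hAB⟩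
  have hxr0 : (N:ℤ) ∣ x*(r0:ℤ) - v := by
    have e : x*(r0:ℤ) - v = (x - v*b)*(r0:ℤ) + (-(v*c))*(N:ℤ) := by
      linear_combination v*hbc
    rw [e]
    exact dvd_add (h1.mul_right _) (Dvd.dvd.mul_left dvd_rfl _)
  have hxK : (K:ℤ) ∣ x - 1 := ⟨v*b*B - B, by linear_combination hAB⟩
  -- cast identities
  have hNZ : (N:ℤ) = t * (q:ℤ)^2 := by rw [hNdef]; push_cast [htT]; ring
  have hKZ : (K:ℤ) = 12*2^(2*s)*(r0:ℤ)^2 := by rw [hKdef]; push_cast; ring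
  have hrZ : (r:ℤ) = 2^s*(q:ℤ)*(r0:ℤ) := by rw [hrfac]; push_cast; ring
  -- N divides D
  have hNx : (N:ℤ) ∣ x^2*(r0:ℤ)^2 - v^2 := by
    have e : x^2*(r0:ℤ)^2 - v^2 = (x*(r0:ℤ) - v)*(x*(r0:ℤ)+v) := by ring
    rw [e]; exact hxr0.mul_right _
  have hN4 : (N:ℤ) ∣ 4*t*(r:ℤ)^2 := ⟨4*2^(2*s)*(r0:ℤ)^2, by rw [hNZ, hrZ]; ring⟩
  have hND : (N:ℤ) ∣ x^2*(r0:ℤ)^2 - 4*t*(r:ℤ)^2 + 3 := by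
    have e : x^2*(r0:ℤ)^2 - 4*t*(r:ℤ)^2 + 3
        = (x^2*(r0:ℤ)^2 - v^2) - 4*t*(r:ℤ)^2 + (v^2+3) := by ring
    rw [e]; exact dvd_add (dvd_sub hNx hN4) hv
  -- 12 divides D
  have h12K : (12:ℤ) ∣ (K:ℤ) := ⟨2^(2*s)*(r0:ℤ)^2, by rw [hKZ]; ring⟩
  have h12x : (12:ℤ) ∣ x^2 - 1 := by
    have e : x^2 - 1 = (x-1)*(x+1) := by ring
    rw [e]; exact ((dvd_trans h12K hxK).mul_right _)
  have h12r0 : (12:ℤ) ∣ (r0:ℤ)^2 - 1 := by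
    obtain ⟨j, hj⟩ : ∃ j, r0 = 6*j+1 ∨ r0 = 6*j+5 := ⟨r0/6, by omega⟩
    rcases hj with h | h
    · have hz : (r0:ℤ) = 6*(j:ℤ)+1 := by exact_mod_cast congrArg (Nat.cast : ℕ → ℤ) h
      exact ⟨3*(j:ℤ)^2+j, by rw [hz]; ring⟩
    · have hz : (r0:ℤ) = 6*(j:ℤ)+5 := by exact_mod_cast congrArg (Nat.cast : ℕ → ℤ) h
      exact ⟨3*(j:ℤ)^2+5*j+2, by rw [hz]; ring⟩
  have h12xr : (12:ℤ) ∣ x^2*(r0:ℤ)^2 - 1 := by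
    have e : x^2*(r0:ℤ)^2 - 1 = x^2*((r0:ℤ)^2-1) + (x^2-1) := by ring
    rw [e]; exact dvd_add (h12r0.mul_left _) h12x
  have ht3 : (3:ℤ) ∣ t - 1 := by
    have hT3 := mod3_of_primes Tn hTpos hTprimes
    obtain ⟨m, hm⟩ : ∃ m, Tn = 3*m+1 := ⟨Tn/3, by omega⟩
    have : (Tn:ℤ) = 3*(m:ℤ)+1 := by exact_mod_cast congrArg (Nat.cast : ℕ → ℤ) hm
    exact ⟨m, by omega⟩
  have h3r2 : (3:ℤ) ∣ (r:ℤ)^2 - 1 := by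
    obtain ⟨j, hj⟩ : ∃ j, r = 3*j+1 ∨ r = 3*j+2 := ⟨r/3, by omega⟩
    rcases hj with h | h
    · have hz : (r:ℤ) = 3*(j:ℤ)+1 := by exact_mod_cast congrArg (Nat.cast : ℕ → ℤ) h
      exact ⟨3*(j:ℤ)^2+2*j, by rw [hz]; ring⟩
    · have hz : (r:ℤ) = 3*(j:ℤ)+2 := by exact_mod_cast congrArg (Nat.cast : ℕ → ℤ) h
      exact ⟨3*(j:ℤ)^2+4*j+1, by rw [hz]; ring⟩
  have h12D : (12:ℤ) ∣ x^2*(r0:ℤ)^2 - 4*t*(r:ℤ)^2 + 3 := by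
    obtain ⟨a1, ha1⟩ := h12xr
    obtain ⟨m1, hm1⟩ := ht3
    obtain ⟨m2, hm2⟩ := h3r2
    exact ⟨a1 - m1*(r:ℤ)^2 - m2, by
      linear_combination ha1 - 4*(r:ℤ)^2*hm1 - 4*hm2⟩
  -- combine
  have hcop12N : IsCoprime (12:ℤ) (N:ℤ) := by
    have hc : Nat.Coprime 12 N := by
      apply coprime_of_primes
      intro p hpp h1 h2
      have hp3 : p % 3 = 1 := hNprimes p hpp h2
      have h12 : p ∣ 2^2*3 := by norm_num at h1 ⊢; exact h1
      rcases (Nat.Prime.dvd_mul hpp).mp h12 with h' | h'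
      · have := (Nat.prime_dvd_prime_iff_eq hpp Nat.prime_two).mp
          (hpp.dvd_of_dvd_pow h'); omega
      · have := (Nat.prime_dvd_prime_iff_eq hpp Nat.prime_three).mp h'; omega
    have := Nat.isCoprime_iff_coprime.mpr hc
    exact_mod_cast this
  obtain ⟨k, hk⟩ := IsCoprime.mul_dvd hcop12N h12D hND
  rw [hNZ] at hk
  obtain ⟨w, hw⟩ := hxK
  rw [hKZ] at hw
  refine ⟨k, x, Int.modEq_zero_iff_dvd.mpr ⟨-(12*k*w*(x+1)), ?_⟩⟩
  rw [hrZ] at hk ⊢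
  linear_combination hk - 12*t*(q:ℤ)^2*k*(x+1)*hw
end

section
/- Let d = 6t and suppose there exist integers x, n, k, r with 3 not dividing r, such that x^2*(k^2 - 12*n*t) ≡ 4*t*r^2 - 3 (mod 12*t*r^2). Then -3 is a square modulo 4t and 4t is a square modulo 3. -/
/-- If d = 6t and x²(k² - 12nt) ≡ 4tr² - 3 (mod 12tr²) for some integers x, n, k
and r not divisible by 3, then -3 is a square mod 4t and 4t is a square mod 3. -/
theorem stmt_12 (t : ℤ) (ht : 0 < t)
    (h : ∃ x n k r : ℤ, ¬ (3 ∣ r) ∧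
      x ^ 2 * (k ^ 2 - 12 * n * t) ≡ 4 * t * r ^ 2 - 3 [ZMOD 12 * t * r ^ 2]) :
    (∃ y : ℤ, y ^ 2 ≡ -3 [ZMOD 4 * t]) ∧ (∃ z : ℤ, z ^ 2 ≡ 4 * t [ZMOD 3]) := by
  obtain ⟨x, n, k, r, hr, h⟩ := h
  constructor
  · have h4 : x ^ 2 * (k ^ 2 - 12 * n * t) ≡ 4 * t * r ^ 2 - 3 [ZMOD 4 * t] :=
      h.of_dvd ⟨3 * r ^ 2, by ring⟩
    obtain ⟨c, hc⟩ := Int.ModEq.dvd h4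
    refine ⟨x * k, Int.modEq_iff_dvd.mpr ⟨c - 3 * n * x ^ 2 - r ^ 2, ?_⟩⟩
    linear_combination hc
  · have h3 : x ^ 2 * (k ^ 2 - 12 * n * t) ≡ 4 * t * r ^ 2 - 3 [ZMOD 3] :=
      h.of_dvd ⟨4 * t * r ^ 2, by ring⟩
    obtain ⟨c, hc⟩ := Int.ModEq.dvd h3
    have hr3 : r % 3 = 1 ∨ r % 3 = 2 := by omega
    have hd : (3 : ℤ) ∣ r ^ 2 - 1 := by
      rcases hr3 with h1 | h2
      · have : (3 : ℤ) ∣ r - 1 := by omega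
        obtain ⟨u, hu⟩ := this
        exact ⟨u * (r + 1), by linear_combination (r + 1) * hu⟩
      · have : (3 : ℤ) ∣ r + 1 := by omega
        obtain ⟨u, hu⟩ := this
        exact ⟨u * (r - 1), by linear_combination (r - 1) * hu⟩
    obtain ⟨u, hu⟩ := hd
    refine ⟨x * k, Int.modEq_iff_dvd.mpr ⟨c - 4 * n * t * x ^ 2 + 1 - 4 * t * u, ?_⟩⟩
    linear_combination hc - 4 * t * hu
end

section
/- Let d0, s, r be positive integers with gcd(r, s*d0) = s, and write x*s*d0 + y*r = s for integers x, y. Then for any integer k with s | k, gcd(s*d0, k + (1 - k/s)*y*r) = s. -/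
/-- If gcd(r, s*d0) = s and x*s*d0 + y*r = s, then for any k divisible by s,
gcd(s*d0, k + (1 - k/s)*y*r) = s. -/
theorem stmt_15 (d0 s r : ℤ) (hd0 : 0 < d0) (hs : 0 < s) (hr : 0 < r)
    (hg : (Int.gcd r (s * d0) : ℤ) = s) (x y : ℤ) (hbez : x * s * d0 + y * r = s)
    (k : ℤ) (hk : s ∣ k) :
    (Int.gcd (s * d0) (k + (1 - k / s) * y * r) : ℤ) = s := by
  obtain ⟨t, rfl⟩ := hk
  have hst : s * t / s = t := Int.mul_ediv_cancel_left t hs.ne'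
  have harg : s * t + (1 - s * t / s) * y * r = s * (1 - (1 - t) * x * d0) := by
    rw [hst]; linear_combination (1 - t) * hbez
  rw [harg]
  have h1 : Int.gcd d0 (1 - (1 - t) * x * d0) = 1 := by
    rw [← Int.isCoprime_iff_gcd_eq_one]
    exact ⟨(1 - t) * x, 1, by ring⟩
  rw [Int.gcd_mul_left, h1, mul_one]
  simp [abs_of_pos hs]
end
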